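/- Let S, c, C₁, C₂, P₀ ∈ ℝ and let Z : ℝ → ℝ be three times differentiable with 0 < Z(r) < 1 for all r. Define v₂ = c + C₂/(1−Z), G₂ = (v₂ − c)v₂″ − (v₂′)², P = P₀ + Z − (C₁²/(6Z²))(2 Z Z″ − (Z′)² + 3), E₄ = (v₂ − c)v₂′ − Z′ + S·P′ − (1/3)(1−Z)²·G₂′ + (1−Z)·Z′·G₂, α₀ = S·C₁², α₁ = C₂² − α₀, and Φ₁ = −(1/(2Z²(1−Z)²))·[2Z(1−Z)(α₁Z + α₀)Z″ + (α₀(1−2Z) − α₁Z²)(3 − (Z′)²) + 6(1−S)Z³(1−Z)²]. Then for all r ∈ ℝ: Φ₁′(r) = 3·E₄(r). -/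

import Mathlib

/-- Lower-layer traveling-wave velocity v₂ = c + C₂/(1 − Z). -/
noncomputable def v2f (c C₂ : ℝ) (Z : ℝ → ℝ) : ℝ → ℝ := fun r => c + C₂ / (1 - Z r)

/-- G₂ = (v₂ − c)v₂″ − (v₂′)². -/
noncomputable def G2f (c C₂ : ℝ) (Z : ℝ → ℝ) : ℝ → ℝ := fun r =>
  (v2f c C₂ Z r - c) * deriv (deriv (v2f c C₂ Z)) r - (deriv (v2f c C₂ Z) r) ^ 2

/-- Pressure integral P = P₀ + Z − (C₁²/(6Z²))(2ZZ″ − (Z′)² + 3). -/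
noncomputable def Pf (P₀ C₁ : ℝ) (Z : ℝ → ℝ) : ℝ → ℝ := fun r =>
  P₀ + Z r - (C₁ ^ 2 / (6 * (Z r) ^ 2)) *
    (2 * Z r * deriv (deriv Z) r - (deriv Z r) ^ 2 + 3)

/-- The reduced lower-layer momentum equation
E₄ = (v₂ − c)v₂′ − Z′ + S·P′ − (1/3)(1−Z)²·G₂′ + (1−Z)·Z′·G₂. -/
noncomputable def E4f (S c C₁ C₂ P₀ : ℝ) (Z : ℝ → ℝ) : ℝ → ℝ := fun r =>
  (v2f c C₂ Z r - c) * deriv (v2f c C₂ Z) r - deriv Z r + S * deriv (Pf P₀ C₁ Z) r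
    - (1/3) * (1 - Z r) ^ 2 * deriv (G2f c C₂ Z) r
    + (1 - Z r) * deriv Z r * G2f c C₂ Z r

/-- The first integral Φ₁. -/
noncomputable def Phi1f (S α₀ α₁ : ℝ) (Z : ℝ → ℝ) : ℝ → ℝ := fun r =>
  -(1 / (2 * (Z r) ^ 2 * (1 - Z r) ^ 2)) *
    (2 * Z r * (1 - Z r) * (α₁ * Z r + α₀) * deriv (deriv Z) r
      + (α₀ * (1 - 2 * Z r) - α₁ * (Z r) ^ 2) * (3 - (deriv Z r) ^ 2)
      + 6 * (1 - S) * (Z r) ^ 3 * (1 - Z r) ^ 2)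

/-!
With `w = 1 - Z`, the velocity closed forms `v₂ - c = C₂ / w`, `v₂′ = C₂ Z′ / w²` and
`G₂ = C₂² (w Z″ + Z′²) / w⁴` turn `3 E₄` into
`-3(1 - S) Z′ - α₀ (Z² Z‴ - 2 Z Z′ Z″ + Z′³ - 3 Z′) / Z³ - C₂² (w² Z‴ + 2 w Z′ Z″ + Z′³ - 3 Z′) / w³`.
On the other side, `Φ₁ = -g(Z) Z″ + g′(Z) (3 - Z′²) / 2 - 3 (1 - S) Z` with
`g(z) = (α₁ z + α₀) / (z (1 - z))`, so `Φ₁′ = -g Z‴ - 2 g′ Z′ Z″ + g″ Z′ (3 - Z′²) / 2 - 3 (1 - S) Z′`.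
Since `C₂² = α₀ + α₁`, the two agree after clearing the denominators `Z³ (1 - Z)³`.
-/

section
variable {Z : ℝ → ℝ} {r : ℝ}

lemma hasDerivAt_v2f (c C₂ : ℝ) (hZ : DifferentiableAt ℝ Z r) (h1 : Z r ≠ 1) :
    HasDerivAt (v2f c C₂ Z) (C₂ * deriv Z r / (1 - Z r) ^ 2) r :=
  (((hasDerivAt_const r C₂).fun_div (hZ.hasDerivAt.const_sub 1) (sub_ne_zero.2 h1.symm)).const_add
    c).congr_deriv (by ring)

lemma deriv_v2f (c C₂ : ℝ) (hZ : Differentiable ℝ Z) (h1 : ∀ r, Z r ≠ 1) :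
    deriv (v2f c C₂ Z) = fun r => C₂ * deriv Z r / (1 - Z r) ^ 2 :=
  funext fun r => (hasDerivAt_v2f c C₂ (hZ r) (h1 r)).deriv

lemma hasDerivAt_deriv_v2f (c C₂ : ℝ) (hZ : Differentiable ℝ Z) (h1 : ∀ r, Z r ≠ 1)
    (hZ' : DifferentiableAt ℝ (deriv Z) r) :
    HasDerivAt (deriv (v2f c C₂ Z))
      (C₂ * (deriv (deriv Z) r * (1 - Z r) + 2 * deriv Z r ^ 2) / (1 - Z r) ^ 3) r := by
  have hw : 1 - Z r ≠ 0 := sub_ne_zero.2 (h1 r).symm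
  rw [deriv_v2f c C₂ hZ h1]
  refine ((hZ'.hasDerivAt.const_mul C₂).fun_div (((hZ r).hasDerivAt.const_sub 1).fun_pow 2)
    (pow_ne_zero 2 hw)).congr_deriv ?_
  field_simp
  ring

lemma G2f_eq (c C₂ : ℝ) (hZ : Differentiable ℝ Z) (hZ' : Differentiable ℝ (deriv Z))
    (h1 : ∀ r, Z r ≠ 1) :
    G2f c C₂ Z = fun r =>
      C₂ ^ 2 * (deriv (deriv Z) r * (1 - Z r) + deriv Z r ^ 2) / (1 - Z r) ^ 4 := by
  funext r
  have hw : 1 - Z r ≠ 0 := sub_ne_zero.2 (h1 r).symm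
  rw [G2f, (hasDerivAt_deriv_v2f c C₂ hZ h1 (hZ' r)).deriv, deriv_v2f c C₂ hZ h1, v2f]
  field_simp
  ring

lemma hasDerivAt_G2f (c C₂ : ℝ) (hZ : Differentiable ℝ Z) (hZ' : Differentiable ℝ (deriv Z))
    (hZ'' : DifferentiableAt ℝ (deriv (deriv Z)) r) (h1 : ∀ r, Z r ≠ 1) :
    HasDerivAt (G2f c C₂ Z)
      (C₂ ^ 2 * (deriv (deriv (deriv Z)) r * (1 - Z r) ^ 2
        + 5 * deriv Z r * deriv (deriv Z) r * (1 - Z r) + 4 * deriv Z r ^ 3) / (1 - Z r) ^ 5) r := by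
  have hw : 1 - Z r ≠ 0 := sub_ne_zero.2 (h1 r).symm
  have hW : HasDerivAt (fun x => 1 - Z x) (-deriv Z r) r := (hZ r).hasDerivAt.const_sub 1
  rw [G2f_eq c C₂ hZ hZ' h1]
  refine ((((hZ''.hasDerivAt.fun_mul hW).fun_add ((hZ' r).hasDerivAt.fun_pow 2)).const_mul
    (C₂ ^ 2)).fun_div (hW.fun_pow 4) (pow_ne_zero 4 hw)).congr_deriv ?_
  field_simp
  ring

lemma hasDerivAt_Pf (P₀ C₁ : ℝ) (hZ : DifferentiableAt ℝ Z r)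
    (hZ' : DifferentiableAt ℝ (deriv Z) r) (hZ'' : DifferentiableAt ℝ (deriv (deriv Z)) r)
    (h0 : Z r ≠ 0) :
    HasDerivAt (Pf P₀ C₁ Z)
      (deriv Z r - C₁ ^ 2 * (Z r ^ 2 * deriv (deriv (deriv Z)) r
        - 2 * Z r * deriv Z r * deriv (deriv Z) r + deriv Z r ^ 3 - 3 * deriv Z r)
        / (3 * Z r ^ 3)) r := by
  have hA : HasDerivAt (fun x => C₁ ^ 2 / (6 * Z x ^ 2)) _ r :=
    (hasDerivAt_const r (C₁ ^ 2)).fun_div ((hZ.hasDerivAt.fun_pow 2).const_mul 6) (by positivity)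
  have hB : HasDerivAt (fun x => 2 * Z x * deriv (deriv Z) x - deriv Z x ^ 2 + 3) _ r :=
    (((hZ.hasDerivAt.const_mul 2).fun_mul hZ''.hasDerivAt).fun_sub (hZ'.hasDerivAt.fun_pow 2)).add_const 3
  refine ((hZ.hasDerivAt.const_add P₀).fun_sub (hA.fun_mul hB)).congr_deriv ?_
  field_simp
  ring

lemma hasDerivAt_Phi1f (S α₀ α₁ : ℝ) (hZ : DifferentiableAt ℝ Z r)
    (hZ' : DifferentiableAt ℝ (deriv Z) r) (hZ'' : DifferentiableAt ℝ (deriv (deriv Z)) r)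
    (h0 : Z r ≠ 0) (h1 : Z r ≠ 1) :
    HasDerivAt (Phi1f S α₀ α₁ Z)
      (-(α₁ * Z r + α₀) / (Z r * (1 - Z r)) * deriv (deriv (deriv Z)) r
        - 2 * (α₁ * Z r ^ 2 + 2 * α₀ * Z r - α₀) / (Z r * (1 - Z r)) ^ 2
          * deriv Z r * deriv (deriv Z) r
        + (α₁ * Z r ^ 3 + α₀ * (3 * Z r ^ 2 - 3 * Z r + 1)) / (Z r * (1 - Z r)) ^ 3
          * deriv Z r * (3 - deriv Z r ^ 2)
        - 3 * (1 - S) * deriv Z r) r := by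
  have hw : 1 - Z r ≠ 0 := sub_ne_zero.2 h1.symm
  have hZ := hZ.hasDerivAt
  have hW : HasDerivAt (fun x => 1 - Z x) (-deriv Z r) r := hZ.const_sub 1
  have hT1 : HasDerivAt (fun x => 2 * Z x * (1 - Z x) * (α₁ * Z x + α₀) * deriv (deriv Z) x) _ r :=
    (((hZ.const_mul 2).fun_mul hW).fun_mul ((hZ.const_mul α₁).add_const α₀)).fun_mul hZ''.hasDerivAt
  have hT2 : HasDerivAt
      (fun x => (α₀ * (1 - 2 * Z x) - α₁ * Z x ^ 2) * (3 - deriv Z x ^ 2)) _ r :=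
    ((((hZ.const_mul 2).const_sub 1).const_mul α₀).fun_sub ((hZ.fun_pow 2).const_mul α₁)).fun_mul
      ((hZ'.hasDerivAt.fun_pow 2).const_sub 3)
  have hT3 : HasDerivAt (fun x => 6 * (1 - S) * Z x ^ 3 * (1 - Z x) ^ 2) _ r :=
    ((hZ.fun_pow 3).const_mul (6 * (1 - S))).fun_mul (hW.fun_pow 2)
  have hD : HasDerivAt (fun x => 2 * Z x ^ 2 * (1 - Z x) ^ 2) _ r :=
    ((hZ.fun_pow 2).const_mul 2).fun_mul (hW.fun_pow 2)
  have hN := (hT1.fun_add hT2).fun_add hT3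
  refine (((hasDerivAt_const r (1 : ℝ)).fun_div hD (by positivity)).fun_neg.fun_mul hN).congr_deriv ?_
  field_simp
  ring

lemma E4f_eq (S c C₁ C₂ P₀ : ℝ) (hZ : Differentiable ℝ Z) (hZ' : Differentiable ℝ (deriv Z))
    (hZ'' : DifferentiableAt ℝ (deriv (deriv Z)) r) (h0 : Z r ≠ 0) (h1 : ∀ r, Z r ≠ 1) :
    E4f S c C₁ C₂ P₀ Z r =
      -(1 - S) * deriv Z r
        - S * C₁ ^ 2 * (Z r ^ 2 * deriv (deriv (deriv Z)) r
          - 2 * Z r * deriv Z r * deriv (deriv Z) r + deriv Z r ^ 3 - 3 * deriv Z r) / (3 * Z r ^ 3)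
        - C₂ ^ 2 * ((1 - Z r) ^ 2 * deriv (deriv (deriv Z)) r
          + 2 * (1 - Z r) * deriv Z r * deriv (deriv Z) r + deriv Z r ^ 3 - 3 * deriv Z r)
          / (3 * (1 - Z r) ^ 3) := by
  have hw : 1 - Z r ≠ 0 := sub_ne_zero.2 (h1 r).symm
  rw [E4f, (hasDerivAt_Pf P₀ C₁ (hZ r) (hZ' r) hZ'' h0).deriv,
    (hasDerivAt_G2f c C₂ hZ hZ' hZ'' h1).deriv, G2f_eq c C₂ hZ hZ' h1, deriv_v2f c C₂ hZ h1, v2f]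
  field_simp
  ring

end

theorem stmt6 (S c C₁ C₂ P₀ : ℝ) (Z : ℝ → ℝ)
    (hZ : Differentiable ℝ Z) (hZ' : Differentiable ℝ (deriv Z))
    (hZ'' : Differentiable ℝ (deriv (deriv Z)))
    (hrange : ∀ r : ℝ, 0 < Z r ∧ Z r < 1) :
    ∀ r : ℝ, deriv (Phi1f S (S * C₁ ^ 2) (C₂ ^ 2 - S * C₁ ^ 2) Z) r
      = 3 * E4f S c C₁ C₂ P₀ Z r := by
  intro r
  have h0 : Z r ≠ 0 := (hrange r).1.ne'
  have h1 : ∀ r, Z r ≠ 1 := fun r => (hrange r).2.ne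
  have hw : 1 - Z r ≠ 0 := sub_ne_zero.2 (h1 r).symm
  rw [(hasDerivAt_Phi1f S _ _ (hZ r) (hZ' r) (hZ'' r) h0 (h1 r)).deriv,
    E4f_eq S c C₁ C₂ P₀ hZ hZ' (hZ'' r) h0 h1]
  field_simp
  ring
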